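/- arXiv:1810.05578 — 2 statements merged into one kernel-verified Lean document; each statement's English description precedes it below -/
import Mathlib

section
/- Let p be a probability vector. A probability vector r is an extreme point of p^TP if and only if p tightly thermomajorizes r. -/
/-- The set of thermal processes. -/
def TP (d : ℕ) (s : Fin d → ℝ) : Set (Matrix (Fin d) (Fin d) ℝ) :=
  {T | (∀ i j, 0 ≤ T i j) ∧ (∀ j, ∑ i, T i j = 1) ∧
    T.mulVec (fun i => s i / ∑ k, s k) = (fun i => s i / ∑ k, s k)}

/-- A probability vector. -/
def ProbVec (d : ℕ) (p : Fin d → ℝ) : Prop := (∀ i, 0 ≤ p i) ∧ ∑ i, p i = 1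

/-- `p^TP`, the set of states achievable from `p` by thermal processes. -/
def achievable (d : ℕ) (s p : Fin d → ℝ) : Set (Fin d → ℝ) :=
  (fun T : Matrix (Fin d) (Fin d) ℝ => T.mulVec p) '' TP d s

/-- The thermomajorization curve of `p`. -/
noncomputable def curve (d : ℕ) (s p : Fin d → ℝ) (x : ℝ) : ℝ :=
  sSup {y | ∃ lam : Fin d → ℝ, (∀ i, lam i ∈ Set.Icc (0 : ℝ) 1) ∧
    (∑ i, lam i * s i = x) ∧ y = ∑ i, lam i * p i}

/-- `π` is a β-order of `p`: the ratios `p i / s i` are arranged nonincreasingly. -/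
def IsBetaOrder (d : ℕ) (s p : Fin d → ℝ) (π : Equiv.Perm (Fin d)) : Prop :=
  ∀ i j : Fin d, i ≤ j → p (π j) / s (π j) ≤ p (π i) / s (π i)

/-- `p` tightly thermomajorizes `r`: `p` thermomajorizes `r` and, for some β-order `π`
of `r`, every elbow `E_k(π,r)`, `k = 0, …, d-2`, lies on the graph of `f_p`. -/
def TightlyThermomajorizes (d : ℕ) (s p r : Fin d → ℝ) : Prop :=
  (∀ x ∈ Set.Icc (0 : ℝ) (∑ i, s i), curve d s r x ≤ curve d s p x) ∧
  ∃ π : Equiv.Perm (Fin d), IsBetaOrder d s r π ∧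
    ∀ k : Fin d, (k : ℕ) + 1 < d →
      curve d s p (∑ i ∈ Finset.Iic k, s (π i)) = ∑ i ∈ Finset.Iic k, r (π i)

/-!
Along a β-order `σ` of `p`, `f_p` is the polygon obtained by filling `[0, x]` greedily with
consecutive cells of lengths `s (σ 0), s (σ 1), …`. Hence `f_p` is concave, and a thermal process
`T` can only lower it, since a feasible `λ` for `T p` yields the feasible `λ T` for `p`.

For a permutation `π`, the vertex `v_π` has partial sums along `π` equal to `f_p` at the ends of
the cells of `π`; it is reached from `p` by spreading each cell of `σ` over the cells of `π` it
meets. If `f_r ≤ f_p` and `c` is a linear functional, sorting `c` decreasingly by `π` and summing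
by parts gives `c ⬝ r ≤ c ⬝ v_π`. So `p^TP` is the convex hull of the vertices, its extreme points
are vertices, and vertices are tight. Conversely, if `r` is tight, its partial sums along its
β-order are maximal over `p^TP` at every elbow, so `r` lies inside no segment of `p^TP`.
-/

open Finset Matrix

lemma exists_perm_antitone {α : Type*} [LinearOrder α] {n : ℕ} (c : Fin n → α) :
    ∃ π : Equiv.Perm (Fin n), Antitone (c ∘ π) :=
  ⟨Tuple.sort (OrderDual.toDual ∘ c), Tuple.monotone_sort (OrderDual.toDual ∘ c)⟩

lemma ConcaveOn.slope_le_slope_of_le {S : Set ℝ} {f : ℝ → ℝ} (hf : ConcaveOn ℝ S f)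
    {a b c e : ℝ} (ha : a ∈ S) (hb : b ∈ S) (hc : c ∈ S) (he : e ∈ S)
    (hab : a < b) (hbc : b ≤ c) (hce : c < e) :
    (f e - f c) / (e - c) ≤ (f b - f a) / (b - a) := by
  rcases hbc.lt_or_eq with hbc | rfl
  · exact (hf.slope_anti_adjacent hb he hbc hce).trans (hf.slope_anti_adjacent ha hc hab hbc)
  · exact hf.slope_anti_adjacent ha he hab hce

theorem sum_range_mul_le_sum_range_mul {a b c : ℕ → ℝ} {n : ℕ}
    (hc : ∀ k, k + 1 < n → c (k + 1) ≤ c k)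
    (hab : ∀ k < n, ∑ j ∈ range k, a j ≤ ∑ j ∈ range k, b j)
    (htot : ∑ j ∈ range n, a j = ∑ j ∈ range n, b j) :
    ∑ j ∈ range n, a j * c j ≤ ∑ j ∈ range n, b j * c j := by
  have hparts := sum_range_by_parts c (fun j => b j - a j) n
  simp only [smul_eq_mul, sum_sub_distrib, htot, sub_self, mul_zero, zero_sub] at hparts
  rw [← sub_nonneg, ← sum_sub_distrib]
  simp only [← mul_sub, mul_comm _ (c _)]
  rw [hparts, neg_nonneg]
  refine sum_nonpos fun k hk => mul_nonpos_of_nonpos_of_nonneg ?_ ?_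
  · exact sub_nonpos.2 (hc k (by rw [mem_range] at hk; omega))
  · exact sub_nonneg.2 (hab _ (by rw [mem_range] at hk; omega))

section Overlap

def overlap (u v c e : ℝ) : ℝ := max 0 (min v e - max u c)

variable {u v c e : ℝ}

lemma overlap_nonneg (u v c e : ℝ) : 0 ≤ overlap u v c e := le_max_left _ _

lemma overlap_comm (u v c e : ℝ) : overlap u v c e = overlap c e u v := by
  rw [overlap, overlap, min_comm, max_comm u]

lemma overlap_self (u c e : ℝ) : overlap u u c e = 0 := by
  simp only [overlap, max_def, min_def]; split_ifs <;> linarith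

lemma overlap_le (hce : c ≤ e) : overlap u v c e ≤ e - c := by
  simp only [overlap, max_def, min_def]; split_ifs <;> linarith

lemma overlap_eq (huv : u ≤ v) (hce : c ≤ e) :
    overlap u v c e = max u (min e v) - max u (min c v) := by
  simp only [overlap, max_def, min_def]; split_ifs <;> linarith

lemma overlap_eq_sub (hc : 0 ≤ c) (hce : c ≤ e) (huv : u ≤ v) :
    overlap u v c e = overlap 0 v c e - overlap 0 u c e := by
  simp only [overlap, max_def, min_def]; split_ifs <;> linarith

lemma sum_range_overlap {y : ℕ → ℝ} (hy : Monotone y) (huv : u ≤ v) (n : ℕ) :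
    ∑ k ∈ range n, overlap u v (y k) (y (k + 1)) =
      max u (min (y n) v) - max u (min (y 0) v) := by
  rw [← sum_range_sub (fun k => max u (min (y k) v))]
  exact sum_congr rfl fun k _ => overlap_eq huv (hy k.le_succ)

end Overlap

section Arrange

variable {d : ℕ} (f g : Fin d → ℝ) (π : Equiv.Perm (Fin d))

def arrange (k : ℕ) : ℝ := if h : k < d then f (π ⟨k, h⟩) else 0

def prefixSum (n : ℕ) : ℝ := ∑ k ∈ range n, arrange f π k

/-- Cutting `[0, ∑ i, s i]` into consecutive cells of lengths `s (π 0), s (π 1), …`, the cell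
of `i` is `[cellStart s π i, cellStart s π i + s i]`. -/
def cellStart (s : Fin d → ℝ) (σ : Equiv.Perm (Fin d)) (i : Fin d) : ℝ :=
  prefixSum s σ (σ.symm i)

lemma arrange_of_lt {k : ℕ} (hk : k < d) : arrange f π k = f (π ⟨k, hk⟩) := dif_pos hk

@[simp] lemma arrange_val (k : Fin d) : arrange f π k = f (π k) := arrange_of_lt f π k.isLt

lemma arrange_mul (k : ℕ) :
    arrange (fun i => f i * g i) π k = arrange f π k * arrange g π k := by
  unfold arrange; split_ifs <;> simp

lemma sum_range_arrange : ∑ k ∈ range d, arrange f π k = ∑ i, f i := by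
  rw [← Fin.sum_univ_eq_sum_range]
  simp only [arrange_val]
  exact Equiv.sum_comp π f

@[simp] lemma prefixSum_zero : prefixSum f π 0 = 0 := sum_range_zero _

lemma prefixSum_succ (n : ℕ) : prefixSum f π (n + 1) = prefixSum f π n + arrange f π n :=
  sum_range_succ _ _

lemma prefixSum_self : prefixSum f π d = ∑ i, f i := sum_range_arrange f π

@[simp] lemma prefixSum_symm_add_one (i : Fin d) :
    prefixSum f π (π.symm i + 1) = prefixSum f π (π.symm i) + f i := by
  rw [prefixSum_succ, arrange_val, Equiv.apply_symm_apply]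

lemma sum_Iic_eq_prefixSum (k : Fin d) : ∑ i ∈ Iic k, f (π i) = prefixSum f π (k + 1) := by
  rw [prefixSum, Nat.range_succ_eq_Iic, ← Fin.map_valEmbedding_Iic, sum_map]
  simp

lemma prefixSum_smul_add_smul (a b : ℝ) (n : ℕ) :
    prefixSum (a • f + b • g) π n = a * prefixSum f π n + b * prefixSum g π n := by
  simp only [prefixSum, mul_sum, ← sum_add_distrib]
  refine sum_congr rfl fun k _ => ?_
  unfold arrange; split_ifs <;> simp

variable {f g}

lemma prefixSum_le_prefixSum (hfg : ∀ i, f i ≤ g i) (n : ℕ) :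
    prefixSum f π n ≤ prefixSum g π n :=
  sum_le_sum fun k _ => by unfold arrange; split_ifs <;> simp [hfg]

lemma prefixSum_mono (hf : ∀ i, 0 ≤ f i) : Monotone (prefixSum f π) := fun _ _ hmn =>
  sum_le_sum_of_subset_of_nonneg (range_subset_range.2 hmn) fun k _ _ => by
    unfold arrange; split_ifs <;> simp [hf]

lemma prefixSum_nonneg (hf : ∀ i, 0 ≤ f i) (n : ℕ) : 0 ≤ prefixSum f π n :=
  (prefixSum_zero f π).symm.le.trans (prefixSum_mono π hf n.zero_le)

lemma prefixSum_le_sum (hf : ∀ i, 0 ≤ f i) {n : ℕ} (hn : n ≤ d) :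
    prefixSum f π n ≤ ∑ i, f i :=
  (prefixSum_mono π hf hn).trans_eq (prefixSum_self f π)

lemma eq_of_prefixSum_eq (h : ∀ n ≤ d, prefixSum f π n = prefixSum g π n) : f = g := by
  funext i
  have := h _ (π.symm i).isLt
  rw [prefixSum_symm_add_one, prefixSum_symm_add_one, h _ (π.symm i).isLt.le] at this
  linarith

lemma indicator_dotProduct {n : ℕ} (hn : n ≤ d) :
    (fun i => if (π.symm i : ℕ) < n then (1 : ℝ) else 0) ⬝ᵥ f = prefixSum f π n := by
  rw [dotProduct, ← sum_range_arrange _ π, prefixSum, ← sum_range_add_sum_Ico _ hn]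
  rw [sum_eq_zero (s := Ico n d) fun k hk => ?_, add_zero]
  · refine sum_congr rfl fun k hk => ?_
    have hk : k < n := mem_range.1 hk
    simp [arrange_of_lt _ _ (hk.trans_le hn), hk]
  · have hk := mem_Ico.1 hk
    simp [arrange_of_lt _ _ hk.2, hk.1]

lemma sum_mul_le_sum_mul_of_prefixSum_le {a b c : Fin d → ℝ} (hc : Antitone (c ∘ π))
    (hab : ∀ n < d, prefixSum a π n ≤ prefixSum b π n) (htot : ∑ i, a i = ∑ i, b i) :
    ∑ i, a i * c i ≤ ∑ i, b i * c i := by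
  rw [← sum_range_arrange (fun i => a i * c i) π, ← sum_range_arrange (fun i => b i * c i) π]
  simp only [arrange_mul]
  refine sum_range_mul_le_sum_range_mul (fun k hk => ?_) hab
    (by rwa [sum_range_arrange, sum_range_arrange])
  rw [arrange_of_lt _ _ hk, arrange_of_lt _ _ (by omega)]
  exact hc (Fin.mk_le_mk.2 k.le_succ)

variable {s : Fin d → ℝ}

lemma cellStart_apply (k : Fin d) : cellStart s π (π k) = prefixSum s π k := by
  simp [cellStart]

lemma cellStart_add_self (i : Fin d) :
    cellStart s π i + s i = prefixSum s π (π.symm i + 1) := by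
  simp [cellStart]

lemma prefixSum_cell (G : ℝ → ℝ → ℝ) {n : ℕ} (hn : n ≤ d) :
    prefixSum (fun i => G (cellStart s π i) (cellStart s π i + s i)) π n =
      ∑ k ∈ range n, G (prefixSum s π k) (prefixSum s π (k + 1)) := by
  refine sum_congr rfl fun k hk => ?_
  have hk : k < d := by rw [mem_range] at hk; omega
  rw [arrange_of_lt _ _ hk, cellStart_add_self, cellStart_apply]
  simp

variable (hs : ∀ i, 0 ≤ s i)
include hs

lemma prefixSum_mem_Icc {n : ℕ} (hn : n ≤ d) : prefixSum s π n ∈ Set.Icc 0 (∑ i, s i) :=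
  ⟨prefixSum_nonneg π hs n, prefixSum_le_sum π hs hn⟩

lemma cellStart_nonneg (i : Fin d) : 0 ≤ cellStart s π i := prefixSum_nonneg π hs _

lemma cellStart_add_le_sum (i : Fin d) : cellStart s π i + s i ≤ ∑ j, s j := by
  rw [cellStart_add_self]; exact prefixSum_le_sum π hs (π.symm i).isLt

lemma sum_overlap_cell {u v : ℝ} (hu : 0 ≤ u) (huv : u ≤ v) (hv : v ≤ ∑ i, s i) :
    ∑ i, overlap u v (cellStart s π i) (cellStart s π i + s i) = v - u := by
  rw [← prefixSum_self, prefixSum_cell π (overlap u v) le_rfl,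
    sum_range_overlap (prefixSum_mono π hs) huv, prefixSum_self, prefixSum_zero,
    min_eq_right hv, min_eq_left (hu.trans huv), max_eq_right huv, max_eq_left hu]

end Arrange

section Curve

variable {d : ℕ} {s p r : Fin d → ℝ} {x y : ℝ}

def Thermomajorizes (d : ℕ) (s p r : Fin d → ℝ) : Prop :=
  ∀ x ∈ Set.Icc (0 : ℝ) (∑ i, s i), curve d s r x ≤ curve d s p x

def curveSet (s p : Fin d → ℝ) (x : ℝ) : Set ℝ :=
  {y | ∃ lam : Fin d → ℝ, (∀ i, lam i ∈ Set.Icc (0 : ℝ) 1) ∧ lam ⬝ᵥ s = x ∧ y = lam ⬝ᵥ p}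

lemma bddAbove_curveSet (s p : Fin d → ℝ) (x : ℝ) : BddAbove (curveSet s p x) := by
  refine ⟨∑ i, |p i|, ?_⟩
  rintro _ ⟨lam, hlam, -, rfl⟩
  refine sum_le_sum fun i _ => (le_abs_self _).trans ?_
  rw [abs_mul, abs_of_nonneg (hlam i).1]
  exact mul_le_of_le_one_left (abs_nonneg _) (hlam i).2

lemma le_curve (hy : y ∈ curveSet s p x) : y ≤ curve d s p x :=
  le_csSup (bddAbove_curveSet s p x) hy

lemma prefixSum_le_curve (π : Equiv.Perm (Fin d)) {n : ℕ} (hn : n ≤ d) :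
    prefixSum p π n ≤ curve d s p (prefixSum s π n) :=
  le_curve ⟨_, fun i => by split_ifs <;> simp, indicator_dotProduct π hn,
    (indicator_dotProduct π hn).symm⟩

/-- The polygonal path through the points `E_k(σ, p)`. -/
noncomputable def polygon (s p : Fin d → ℝ) (σ : Equiv.Perm (Fin d)) (x : ℝ) : ℝ :=
  ∑ i, p i / s i * overlap 0 x (cellStart s σ i) (cellStart s σ i + s i)

variable (hs : ∀ i, 0 < s i)
include hs

lemma polygon_mem_curveSet (σ : Equiv.Perm (Fin d)) (hx : x ∈ Set.Icc 0 (∑ i, s i)) :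
    polygon s p σ x ∈ curveSet s p x := by
  refine ⟨fun i => overlap 0 x (cellStart s σ i) (cellStart s σ i + s i) / s i,
    fun i => ⟨div_nonneg (overlap_nonneg _ _ _ _) (hs i).le, ?_⟩, ?_, ?_⟩
  · rw [div_le_one (hs i)]
    simpa using overlap_le (le_add_of_nonneg_right (hs i).le)
  · simp only [dotProduct, div_mul_cancel₀ _ (hs _).ne']
    rw [sum_overlap_cell σ (fun i => (hs i).le) le_rfl hx.1 hx.2, sub_zero]
  · exact sum_congr rfl fun i _ => by ring

/-- The greedy choice is optimal: by Abel summation against the decreasing ratios `p i / s i`,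
since its partial masses along `σ` majorize those of any feasible `λ`. -/
lemma le_polygon {σ : Equiv.Perm (Fin d)} (hσ : IsBetaOrder d s p σ)
    (hy : y ∈ curveSet s p x) : y ≤ polygon s p σ x := by
  obtain ⟨lam, hlam, rfl, rfl⟩ := hy
  have hmass : ∀ i, lam i * s i ≤ s i := fun i => mul_le_of_le_one_left (hs i).le (hlam i).2
  have hmass0 : ∀ i, 0 ≤ lam i * s i := fun i => mul_nonneg (hlam i).1 (hs i).le
  have hx0 : 0 ≤ lam ⬝ᵥ s := sum_nonneg fun i _ => hmass0 i
  have hxZ : lam ⬝ᵥ s ≤ ∑ i, s i := sum_le_sum fun i _ => hmass i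
  calc lam ⬝ᵥ p = ∑ i, lam i * s i * (p i / s i) :=
        sum_congr rfl fun i _ => by field_simp [(hs i).ne']
    _ ≤ ∑ i, overlap 0 (lam ⬝ᵥ s) (cellStart s σ i) (cellStart s σ i + s i) * (p i / s i) := by
        refine sum_mul_le_sum_mul_of_prefixSum_le σ hσ (fun n hn => ?_) ?_
        · rw [prefixSum_cell σ (overlap 0 _) hn.le,
            sum_range_overlap (prefixSum_mono σ fun i => (hs i).le) hx0]
          simp only [prefixSum_zero, min_eq_left hx0, max_self, sub_zero]
          exact le_max_of_le_right (le_min (prefixSum_le_prefixSum σ hmass n)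
            (prefixSum_le_sum σ hmass0 hn.le))
        · rw [sum_overlap_cell σ (fun i => (hs i).le) le_rfl hx0 hxZ, sub_zero]; rfl
    _ = polygon s p σ (lam ⬝ᵥ s) := sum_congr rfl fun i _ => mul_comm _ _

lemma curve_eq_polygon {σ : Equiv.Perm (Fin d)} (hσ : IsBetaOrder d s p σ)
    (hx : x ∈ Set.Icc 0 (∑ i, s i)) : curve d s p x = polygon s p σ x :=
  IsGreatest.csSup_eq ⟨polygon_mem_curveSet hs σ hx, fun _ => le_polygon hs hσ⟩

omit hs in
lemma exists_isBetaOrder (s p : Fin d → ℝ) : ∃ σ, IsBetaOrder d s p σ :=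
  exists_perm_antitone fun i => p i / s i

lemma prefixSum_le_curve_of_thermomajorizes (h : Thermomajorizes d s p r)
    (π : Equiv.Perm (Fin d)) {n : ℕ} (hn : n ≤ d) :
    prefixSum r π n ≤ curve d s p (prefixSum s π n) :=
  (prefixSum_le_curve π hn).trans (h _ (prefixSum_mem_Icc π (fun i => (hs i).le) hn))

lemma curve_mem_curveSet (hx : x ∈ Set.Icc 0 (∑ i, s i)) : curve d s p x ∈ curveSet s p x := by
  obtain ⟨σ, hσ⟩ := exists_isBetaOrder s p
  rw [curve_eq_polygon hs hσ hx]
  exact polygon_mem_curveSet hs σ hx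

lemma curve_zero : curve d s p 0 = 0 := by
  obtain ⟨σ, hσ⟩ := exists_isBetaOrder s p
  rw [curve_eq_polygon hs hσ ⟨le_rfl, sum_nonneg fun i _ => (hs i).le⟩]
  simp [polygon, overlap_self]

lemma concaveOn_curve : ConcaveOn ℝ (Set.Icc 0 (∑ i, s i)) (curve d s p) := by
  refine ⟨convex_Icc _ _, fun x hx y hy a b ha hb hab => le_curve ?_⟩
  obtain ⟨lam, hlam, hlam_s, hlam_p⟩ := curve_mem_curveSet (p := p) hs hx
  obtain ⟨mu, hmu, hmu_s, hmu_p⟩ := curve_mem_curveSet (p := p) hs hy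
  refine ⟨a • lam + b • mu, fun i => convex_Icc 0 1 (hlam i) (hmu i) ha hb hab, ?_, ?_⟩
  · rw [add_dotProduct, smul_dotProduct, smul_dotProduct, hlam_s, hmu_s]
  · rw [add_dotProduct, smul_dotProduct, smul_dotProduct, ← hlam_p, ← hmu_p]

end Curve

section ThermalProcess

variable {d : ℕ} {s p : Fin d → ℝ} {T : Matrix (Fin d) (Fin d) ℝ}

lemma gibbs_eq_smul (s : Fin d → ℝ) : (fun i => s i / ∑ k, s k) = (∑ k, s k)⁻¹ • s := by
  funext i; simp [div_eq_inv_mul]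

lemma mulVec_self_of_mem_TP (hs : ∀ i, 0 < s i) (hT : T ∈ TP d s) : T *ᵥ s = s := by
  rcases isEmpty_or_nonempty (Fin d) with h | h
  · exact Subsingleton.elim _ _
  have hZ : (∑ k, s k)⁻¹ ≠ 0 := inv_ne_zero (sum_pos (fun i _ => hs i) univ_nonempty).ne'
  have h := hT.2.2
  rw [gibbs_eq_smul, mulVec_smul] at h
  exact smul_right_injective _ hZ h

lemma sum_mulVec_of_mem_TP (hT : T ∈ TP d s) (p : Fin d → ℝ) : ∑ i, (T *ᵥ p) i = ∑ i, p i := by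
  simp only [mulVec, dotProduct]
  rw [sum_comm]
  simp [← sum_mul, hT.2.1]

lemma curve_mulVec_le (hs : ∀ i, 0 < s i) (hT : T ∈ TP d s) {x : ℝ}
    (hx : x ∈ Set.Icc 0 (∑ i, s i)) : curve d s (T *ᵥ p) x ≤ curve d s p x := by
  refine csSup_le ⟨_, polygon_mem_curveSet hs 1 hx⟩ ?_
  rintro _ ⟨lam, hlam, rfl, rfl⟩
  refine le_curve ⟨lam ᵥ* T, fun j => ⟨?_, ?_⟩, ?_, dotProduct_mulVec lam T p⟩
  · show 0 ≤ ∑ i, lam i * T i j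
    exact sum_nonneg fun i _ => mul_nonneg (hlam i).1 (hT.1 i j)
  · show ∑ i, lam i * T i j ≤ 1
    calc ∑ i, lam i * T i j ≤ ∑ i, T i j := sum_le_sum fun i _ =>
          mul_le_of_le_one_left (hT.1 i j) (hlam i).2
    _ = 1 := hT.2.1 j
  · rw [← dotProduct_mulVec, mulVec_self_of_mem_TP hs hT]; rfl

lemma convex_TP (s : Fin d → ℝ) : Convex ℝ (TP d s) := by
  rintro T₁ ⟨hT₁, hT₁', hT₁g⟩ T₂ ⟨hT₂, hT₂', hT₂g⟩ a b ha hb hab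
  refine ⟨fun i j => ?_, fun j => ?_, ?_⟩
  · simp only [Matrix.add_apply, Matrix.smul_apply, smul_eq_mul]
    exact add_nonneg (mul_nonneg ha (hT₁ i j)) (mul_nonneg hb (hT₂ i j))
  · simp only [Matrix.add_apply, Matrix.smul_apply, smul_eq_mul]
    rw [sum_add_distrib, ← mul_sum, ← mul_sum, hT₁' j, hT₂' j, mul_one, mul_one, hab]
  · rw [add_mulVec, smul_mulVec, smul_mulVec, hT₁g, hT₂g, ← add_smul, hab, one_smul]

lemma convex_achievable (s p : Fin d → ℝ) : Convex ℝ (achievable d s p) :=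
  (convex_TP s).is_linear_image ⟨fun _ _ => add_mulVec _ _ _, fun _ _ => smul_mulVec _ _ _⟩

lemma sum_of_mem_achievable {r : Fin d → ℝ} (hr : r ∈ achievable d s p) :
    ∑ i, r i = ∑ i, p i := by
  obtain ⟨T, hT, rfl⟩ := hr
  exact sum_mulVec_of_mem_TP hT p

lemma thermomajorizes_of_mem_achievable (hs : ∀ i, 0 < s i) {r : Fin d → ℝ}
    (hr : r ∈ achievable d s p) : Thermomajorizes d s p r := by
  obtain ⟨T, hT, rfl⟩ := hr
  exact fun _ => curve_mulVec_le hs hT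

end ThermalProcess

section Vertex

variable {d : ℕ} {s p : Fin d → ℝ}

noncomputable def vertex (s p : Fin d → ℝ) (π : Equiv.Perm (Fin d)) (i : Fin d) : ℝ :=
  curve d s p (cellStart s π i + s i) - curve d s p (cellStart s π i)

noncomputable def transportMatrix (s : Fin d → ℝ) (σ π : Equiv.Perm (Fin d)) :
    Matrix (Fin d) (Fin d) ℝ := fun i j =>
  overlap (cellStart s σ j) (cellStart s σ j + s j) (cellStart s π i) (cellStart s π i + s i) /
    s j

variable (hs : ∀ i, 0 < s i)
include hs

lemma transportMatrix_mem_TP (σ π : Equiv.Perm (Fin d)) : transportMatrix s σ π ∈ TP d s := by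
  have hs0 : ∀ i, 0 ≤ s i := fun i => (hs i).le
  have hcell : ∀ τ τ' : Equiv.Perm (Fin d), ∀ i,
      ∑ j, overlap (cellStart s τ i) (cellStart s τ i + s i)
        (cellStart s τ' j) (cellStart s τ' j + s j) = s i := fun τ τ' i => by
    rw [sum_overlap_cell τ' hs0 (cellStart_nonneg τ hs0 i) (le_add_of_nonneg_right (hs0 i))
      (cellStart_add_le_sum τ hs0 i), add_sub_cancel_left]
  refine ⟨fun i j => div_nonneg (overlap_nonneg _ _ _ _) (hs0 j), fun j => ?_, ?_⟩
  · simp only [transportMatrix]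
    rw [← sum_div, hcell σ π j, div_self (hs j).ne']
  · have hself : transportMatrix s σ π *ᵥ s = s := funext fun i => by
      simp only [mulVec, dotProduct, transportMatrix, div_mul_cancel₀ _ (hs _).ne']
      simp only [overlap_comm (cellStart s σ _)]
      exact hcell π σ i
    rw [gibbs_eq_smul, mulVec_smul, hself]

lemma transportMatrix_mulVec {σ : Equiv.Perm (Fin d)} (hσ : IsBetaOrder d s p σ)
    (π : Equiv.Perm (Fin d)) : transportMatrix s σ π *ᵥ p = vertex s p π := by
  have hs0 : ∀ i, 0 ≤ s i := fun i => (hs i).le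
  funext i
  have hu := cellStart_nonneg π hs0 i
  have huv : cellStart s π i ≤ cellStart s π i + s i := le_add_of_nonneg_right (hs0 i)
  have hv := cellStart_add_le_sum π hs0 i
  rw [vertex, curve_eq_polygon hs hσ ⟨hu.trans huv, hv⟩, curve_eq_polygon hs hσ ⟨hu, huv.trans hv⟩,
    polygon, polygon, ← sum_sub_distrib, mulVec, dotProduct]
  refine sum_congr rfl fun j _ => ?_
  rw [transportMatrix, overlap_comm, overlap_eq_sub (cellStart_nonneg σ hs0 j)
    (le_add_of_nonneg_right (hs0 j)) huv]
  ring

lemma vertex_mem_achievable (p : Fin d → ℝ) (π : Equiv.Perm (Fin d)) :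
    vertex s p π ∈ achievable d s p := by
  obtain ⟨σ, hσ⟩ := exists_isBetaOrder s p
  exact ⟨_, transportMatrix_mem_TP hs σ π, transportMatrix_mulVec hs hσ π⟩

lemma prefixSum_vertex (π : Equiv.Perm (Fin d)) {n : ℕ} (hn : n ≤ d) :
    prefixSum (vertex s p π) π n = curve d s p (prefixSum s π n) := by
  unfold vertex
  rw [prefixSum_cell π (fun a b => curve d s p b - curve d s p a) hn,
    sum_range_sub (fun k => curve d s p (prefixSum s π k)),
    prefixSum_zero, curve_zero hs, sub_zero]

lemma isBetaOrder_vertex (π : Equiv.Perm (Fin d)) : IsBetaOrder d s (vertex s p π) π := by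
  have hs0 : ∀ i, 0 ≤ s i := fun i => (hs i).le
  have hcell : ∀ i, cellStart s π i ∈ Set.Icc 0 (∑ j, s j) ∧
      cellStart s π i + s i ∈ Set.Icc 0 (∑ j, s j) := fun i =>
    ⟨prefixSum_mem_Icc π hs0 (π.symm i).isLt.le,
      cellStart_add_self π i ▸ prefixSum_mem_Icc π hs0 (π.symm i).isLt⟩
  intro k l hkl
  rcases hkl.lt_or_eq with hkl | rfl
  · have := (concaveOn_curve (p := p) hs).slope_le_slope_of_le (hcell (π k)).1 (hcell (π k)).2
      (hcell (π l)).1 (hcell (π l)).2 (lt_add_of_pos_right _ (hs _)) ?_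
      (lt_add_of_pos_right _ (hs _))
    · simpa only [vertex, add_sub_cancel_left] using this
    · rw [cellStart_add_self, cellStart_apply, Equiv.symm_apply_apply]
      exact prefixSum_mono π hs0 hkl
  · exact le_rfl

lemma tightlyThermomajorizes_vertex (p : Fin d → ℝ) (π : Equiv.Perm (Fin d)) :
    TightlyThermomajorizes d s p (vertex s p π) :=
  ⟨thermomajorizes_of_mem_achievable hs (vertex_mem_achievable hs p π), π,
    isBetaOrder_vertex hs π, fun k _ => by
      rw [sum_Iic_eq_prefixSum, sum_Iic_eq_prefixSum, prefixSum_vertex hs π k.isLt]⟩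

end Vertex

section Extreme

variable {d : ℕ} {s p r : Fin d → ℝ}

lemma sum_mul_le_sum_vertex_mul (hs : ∀ i, 0 < s i) (hsum : ∑ i, r i = ∑ i, p i)
    (hdom : Thermomajorizes d s p r) {c : Fin d → ℝ} {π : Equiv.Perm (Fin d)}
    (hc : Antitone (c ∘ π)) : ∑ i, r i * c i ≤ ∑ i, vertex s p π i * c i := by
  refine sum_mul_le_sum_mul_of_prefixSum_le π hc (fun n hn => ?_) ?_
  · rw [prefixSum_vertex hs π hn.le]
    exact prefixSum_le_curve_of_thermomajorizes hs hdom π hn.le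
  · rw [hsum, sum_of_mem_achievable (vertex_mem_achievable hs p π)]

lemma mem_convexHull_vertex (hs : ∀ i, 0 < s i) (hsum : ∑ i, r i = ∑ i, p i)
    (hdom : Thermomajorizes d s p r) : r ∈ convexHull ℝ (Set.range (vertex s p)) := by
  by_contra hr
  obtain ⟨f, u, hfu, huf⟩ := geometric_hahn_banach_closed_point (convex_convexHull ℝ _)
    ((Set.finite_range _).isCompact_convexHull ℝ).isClosed hr
  set c : Fin d → ℝ := fun i => f fun j => if i = j then 1 else 0
  have hf : ∀ q, f q = ∑ i, q i * c i := fun q =>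
    (f : (Fin d → ℝ) →ₗ[ℝ] ℝ).pi_apply_eq_sum_univ q
  obtain ⟨π, hπ⟩ := exists_perm_antitone c
  have hvertex := hfu _ (subset_convexHull ℝ _ ⟨π, rfl⟩)
  have := sum_mul_le_sum_vertex_mul hs hsum hdom hπ
  rw [hf] at hvertex huf
  linarith

lemma achievable_eq_convexHull (hs : ∀ i, 0 < s i) (p : Fin d → ℝ) :
    achievable d s p = convexHull ℝ (Set.range (vertex s p)) :=
  Set.Subset.antisymm
    (fun _ hr => mem_convexHull_vertex hs (sum_of_mem_achievable hr)
      (thermomajorizes_of_mem_achievable hs hr))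
    (convexHull_min (Set.range_subset_iff.2 (vertex_mem_achievable hs p)) (convex_achievable s p))

lemma mem_extremePoints_of_tightlyThermomajorizes (hs : ∀ i, 0 < s i)
    (hsum : ∑ i, r i = ∑ i, p i) (ht : TightlyThermomajorizes d s p r) :
    r ∈ Set.extremePoints ℝ (achievable d s p) := by
  obtain ⟨hdom, π, -, helbow⟩ := ht
  have hmax : ∀ q ∈ achievable d s p, ∀ n ≤ d, prefixSum q π n ≤ prefixSum r π n := by
    intro q hq n hn
    rcases hn.lt_or_eq with hn | rfl
    · rcases Nat.eq_zero_or_pos n with rfl | hn0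
      · simp
      have h := helbow ⟨n - 1, by omega⟩ (by simp only; omega)
      simp only [sum_Iic_eq_prefixSum, Nat.sub_add_cancel hn0] at h
      rw [← h]
      exact prefixSum_le_curve_of_thermomajorizes hs (thermomajorizes_of_mem_achievable hs hq)
        π hn.le
    · rw [prefixSum_self, prefixSum_self, sum_of_mem_achievable hq, hsum]
  refine ⟨by rw [achievable_eq_convexHull hs]; exact mem_convexHull_vertex hs hsum hdom,
    fun r₁ hr₁ r₂ hr₂ ⟨a, b, ha, hb, hab, hr⟩ => eq_of_prefixSum_eq π fun n hn => ?_⟩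
  have h₁ := hmax r₁ hr₁ n hn
  have h₂ := hmax r₂ hr₂ n hn
  have hzero : a * (prefixSum r π n - prefixSum r₁ π n) +
      b * (prefixSum r π n - prefixSum r₂ π n) = 0 := by
    linear_combination prefixSum r π n * hab + prefixSum_smul_add_smul r₁ r₂ π a b n -
      congrArg (prefixSum · π n) hr
  nlinarith [mul_nonneg ha.le (sub_nonneg.2 h₁), mul_nonneg hb.le (sub_nonneg.2 h₂)]

end Extreme

theorem stmt8_general (d : ℕ) (s : Fin d → ℝ) (hs : ∀ i, 0 < s i)
    (p r : Fin d → ℝ) (hp : ProbVec d p) (hr : ProbVec d r) :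
    r ∈ Set.extremePoints ℝ (achievable d s p) ↔ TightlyThermomajorizes d s p r := by
  refine ⟨fun hext => ?_,
    mem_extremePoints_of_tightlyThermomajorizes hs (hr.2.trans hp.2.symm)⟩
  rw [achievable_eq_convexHull hs] at hext
  obtain ⟨π, rfl⟩ := extremePoints_convexHull_subset hext
  exact tightlyThermomajorizes_vertex hs p π

/-- a probability vector `r` is an extreme point of `p^TP` iff `p`
tightly thermomajorizes `r`. -/
theorem stmt8 (d : ℕ) (hd : 1 ≤ d) (s : Fin d → ℝ) (hs : ∀ i, 0 < s i)
    (p r : Fin d → ℝ) (hp : ProbVec d p) (hr : ProbVec d r) :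
    r ∈ Set.extremePoints ℝ (achievable d s p) ↔ TightlyThermomajorizes d s p r :=
  stmt8_general d s hs p r hp hr
end

section
/- Let p be a probability vector and let S be a nonempty finite set of points (x,y) with 0 < x < Z, each lying on the graph of f_p (i.e., y = f_p(x)). Then the set H_S = { r ∈ p^TP : f_r(x) = y for all (x,y) ∈ S } is a face of p^TP: for every r ∈ H_S and every decomposition r = λ r1 + (1−λ) r2 with r1, r2 ∈ p^TP and λ ∈ (0,1), both r1 and r2 belong to H_S. -/
/-!
A thermal process `T` fixes the Gibbs weights, so it sends every admissible weight vector `λ`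
(entries in `[0,1]`, `λ ⬝ s = x`) to the admissible vector `λ T`, with `λ ⬝ (T p) = (λ T) ⬝ p`;
hence `f_{Tp} ≤ f_p` pointwise. For fixed `x`, `f_r(x)` is a supremum of linear functionals of `r`,
hence convex in `r`. If `r = λ r₁ + (1 - λ) r₂` touches `f_p` at `x`, then
`f_p(x) = f_r(x) ≤ λ f_{r₁}(x) + (1 - λ) f_{r₂}(x) ≤ f_p(x)`, which forces `f_{rᵢ}(x) = f_p(x)`.
-/

open Finset Matrix Set

variable {d : ℕ} {s : Fin d → ℝ} {x : ℝ}

lemma bddAbove_curve_set (s p : Fin d → ℝ) (x : ℝ) :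
    BddAbove {y | ∃ lam : Fin d → ℝ, (∀ i, lam i ∈ Icc (0 : ℝ) 1) ∧
      (∑ i, lam i * s i = x) ∧ y = ∑ i, lam i * p i} := by
  refine ⟨∑ i, |p i|, ?_⟩
  rintro y ⟨lam, hlam, -, rfl⟩
  exact sum_le_sum fun i _ => (mul_le_mul_of_nonneg_left (le_abs_self (p i)) (hlam i).1).trans
    (mul_le_of_le_one_left (abs_nonneg _) (hlam i).2)

lemma le_curve_s13 {p lam : Fin d → ℝ} (hlam : ∀ i, lam i ∈ Icc (0 : ℝ) 1) (hsum : lam ⬝ᵥ s = x) :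
    lam ⬝ᵥ p ≤ curve d s p x :=
  le_csSup (bddAbove_curve_set s p x) ⟨lam, hlam, hsum, rfl⟩

lemma curve_le {p : Fin d → ℝ} {c : ℝ} (hx0 : 0 ≤ x) (hxZ : x ≤ ∑ i, s i)
    (h : ∀ lam : Fin d → ℝ, (∀ i, lam i ∈ Icc (0 : ℝ) 1) → lam ⬝ᵥ s = x → lam ⬝ᵥ p ≤ c) :
    curve d s p x ≤ c := by
  have hZ : 0 ≤ ∑ i, s i := hx0.trans hxZ
  -- the constant weight `x / Z` is admissible, also when `Z = 0` (then `x = 0`)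
  have hconst : ∑ i, x / (∑ k, s k) * s i = x := by
    rw [← mul_sum]
    exact div_mul_cancel_of_imp fun h => le_antisymm (h ▸ hxZ) hx0
  refine csSup_le ⟨_, fun _ => x / ∑ k, s k,
    fun _ => ⟨div_nonneg hx0 hZ, div_le_one_of_le₀ hxZ hZ⟩, hconst, rfl⟩ ?_
  rintro _ ⟨lam, hlam, hsum, rfl⟩
  exact h lam hlam hsum

lemma mulVec_eq_self_of_mem_TP {T : Matrix (Fin d) (Fin d) ℝ} (hT : T ∈ TP d s)
    (hZ : ∑ i, s i ≠ 0) : T *ᵥ s = s := by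
  have hg : (fun i => s i / ∑ k, s k) = (∑ k, s k)⁻¹ • s := by
    ext i
    simp [div_eq_inv_mul]
  have h := hT.2.2
  rw [hg, mulVec_smul] at h
  exact smul_right_injective _ (inv_ne_zero hZ) h

lemma curve_le_of_mem_achievable {p r : Fin d → ℝ} (hr : r ∈ achievable d s p)
    (hZ : ∑ i, s i ≠ 0) (hx0 : 0 ≤ x) (hxZ : x ≤ ∑ i, s i) :
    curve d s r x ≤ curve d s p x := by
  obtain ⟨T, hT, rfl⟩ := hr
  refine curve_le hx0 hxZ fun lam hlam hsum => ?_
  have hw : ∀ j, (lam ᵥ* T) j ∈ Icc (0 : ℝ) 1 := fun j => by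
    simp only [vecMul, dotProduct]
    exact ⟨sum_nonneg fun i _ => mul_nonneg (hlam i).1 (hT.1 i j),
        (sum_le_sum fun i _ => mul_le_of_le_one_left (hT.1 i j) (hlam i).2).trans_eq (hT.2.1 j)⟩
  have hws : (lam ᵥ* T) ⬝ᵥ s = x := by
    rw [← dotProduct_mulVec, mulVec_eq_self_of_mem_TP hT hZ, hsum]
  simpa only [dotProduct_mulVec] using le_curve_s13 hw hws

lemma convexOn_curve (hx0 : 0 ≤ x) (hxZ : x ≤ ∑ i, s i) :
    ConvexOn ℝ univ fun p : Fin d → ℝ => curve d s p x := by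
  refine ⟨convex_univ, fun a _ b _ μ ν hμ hν _ => curve_le hx0 hxZ fun lam hlam hsum => ?_⟩
  rw [dotProduct_add, dotProduct_smul, dotProduct_smul]
  exact add_le_add (smul_le_smul_of_nonneg_left (le_curve_s13 hlam hsum) hμ)
    (smul_le_smul_of_nonneg_left (le_curve_s13 hlam hsum) hν)

theorem stmt13_general (d : ℕ) (s : Fin d → ℝ) (p : Fin d → ℝ) (S : Finset (ℝ × ℝ))
    (hSon : ∀ q ∈ S, 0 < q.1 ∧ q.1 < ∑ i, s i ∧ curve d s p q.1 = q.2) :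
    ∀ r ∈ achievable d s p, (∀ q ∈ S, curve d s r q.1 = q.2) →
      ∀ r1 ∈ achievable d s p, ∀ r2 ∈ achievable d s p, ∀ lam ∈ Set.Ioo (0 : ℝ) 1,
        r = lam • r1 + (1 - lam) • r2 →
          (∀ q ∈ S, curve d s r1 q.1 = q.2) ∧ (∀ q ∈ S, curve d s r2 q.1 = q.2) := by
  intro r _ hrS r1 hr1 r2 hr2 lam ⟨hlam0, hlam1⟩ rfl
  have touch : ∀ q ∈ S, curve d s r1 q.1 = q.2 ∧ curve d s r2 q.1 = q.2 := by
    intro q hq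
    obtain ⟨hx0, hxZ, hpq⟩ := hSon q hq
    have hZ : ∑ i, s i ≠ 0 := (hx0.trans hxZ).ne'
    have hr1_le := hpq ▸ curve_le_of_mem_achievable hr1 hZ hx0.le hxZ.le
    have hr2_le := hpq ▸ curve_le_of_mem_achievable hr2 hZ hx0.le hxZ.le
    have hconv := (convexOn_curve (s := s) hx0.le hxZ.le).2 (mem_univ r1) (mem_univ r2)
      hlam0.le (sub_nonneg.2 hlam1.le) (add_sub_cancel lam 1)
    simp only [smul_eq_mul, hrS q hq] at hconv
    constructor <;> nlinarith
  exact ⟨fun q hq => (touch q hq).1, fun q hq => (touch q hq).2⟩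

/-- for a nonempty finite set `S` of points `(x,y)` with `0 < x < Z`
lying on the graph of `f_p`, the set `H_S = {r ∈ p^TP : f_r(x) = y for all (x,y) ∈ S}`
is a face of `p^TP`: whenever `r ∈ H_S` is a proper convex combination of
`r1, r2 ∈ p^TP`, both `r1` and `r2` belong to `H_S`. -/
theorem stmt13 (d : ℕ) (hd : 1 ≤ d) (s : Fin d → ℝ) (hs : ∀ i, 0 < s i)
    (p : Fin d → ℝ) (hp : ProbVec d p)
    (S : Finset (ℝ × ℝ)) (hS : S.Nonempty)
    (hSon : ∀ q ∈ S, 0 < q.1 ∧ q.1 < ∑ i, s i ∧ curve d s p q.1 = q.2) :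
    ∀ r ∈ achievable d s p, (∀ q ∈ S, curve d s r q.1 = q.2) →
      ∀ r1 ∈ achievable d s p, ∀ r2 ∈ achievable d s p, ∀ lam ∈ Set.Ioo (0 : ℝ) 1,
        r = lam • r1 + (1 - lam) • r2 →
          (∀ q ∈ S, curve d s r1 q.1 = q.2) ∧ (∀ q ∈ S, curve d s r2 q.1 = q.2) :=
  stmt13_general d s p S hSon
end
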